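/- arXiv:1706.09223 — 3 statements merged into one kernel-verified Lean document; each statement's English description precedes it below -/
import Mathlib

section
/- For m > 0 and α = √(2m² + 4), the function Z(s) = log( 4α² m^{α+2} s^{α-2} / ((α+2) m^α + (α-2) s^α)² ) solves -Z'' - Z'/s = e^Z on (0,∞), satisfies Z(m) = 0 and Z'(m) = 0, and Z(s) ≤ 0 on its domain. -/
/-!
With `t = log s` the radial equation becomes `-w'' = e^w` for `w(t) = Z(e^t) + 2t`, whose solutions
`log (2α²ab e^{αt} / (a + b e^{αt})²)` give the profiles `log (2α²ab s^{α-2} / (a + b s^α)²)`.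
For `a = (α+2) m^α`, `b = α-2` the constant `2α²ab = 2α²(α²-4) m^α` equals `4α² m^{α+2}` exactly
when `α² = 2m² + 4`. The bound `Z ≤ 0`, with equality at `s = m`, is the weighted AM-GM inequality
for `m^α` and `s^α` with weights `(α+2)/2α` and `(α-2)/2α`.
-/

open Real Filter Topology

/-- The radial Laplacian in divergence form: `Z'' + Z'/s = (s Z')' / s`, with `f = s Z'`. -/
theorem deriv_deriv_add_deriv_div_eq {Z f : ℝ → ℝ} {s f' : ℝ} (hs : s ≠ 0)
    (hZ : ∀ᶠ t in 𝓝 s, HasDerivAt Z (f t / t) t) (hf : HasDerivAt f f' s) :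
    deriv (deriv Z) s + deriv Z s / s = f' / s := by
  have hderiv : deriv Z =ᶠ[𝓝 s] fun t => f t / t := hZ.mono fun t ht => ht.deriv
  have hquot : HasDerivAt (fun t => f t / t) ((f' * s - f s * 1) / s ^ 2) s :=
    hf.div (hasDerivAt_id' s) hs
  rw [hderiv.deriv_eq, hquot.deriv, hderiv.eq_of_nhds]
  field_simp
  ring

noncomputable def liouvilleProfile (a b α s : ℝ) : ℝ :=
  log (2 * α ^ 2 * a * b * s ^ (α - 2) / (a + b * s ^ α) ^ 2)

section LiouvilleProfile

variable {a b α s : ℝ}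

theorem hasDerivAt_add_mul_rpow (a b α : ℝ) {s : ℝ} (hs : s ≠ 0) :
    HasDerivAt (fun t => a + b * t ^ α) (b * (α * s ^ (α - 1))) s :=
  ((hasDerivAt_rpow_const (Or.inl hs)).const_mul b).const_add a

theorem exp_liouvilleProfile (ha : 0 < a) (hb : 0 < b) (hα : α ≠ 0) (hs : 0 < s) :
    exp (liouvilleProfile a b α s) = 2 * α ^ 2 * a * b * s ^ (α - 2) / (a + b * s ^ α) ^ 2 :=
  exp_log (by positivity)

theorem liouvilleProfile_eq (ha : 0 < a) (hb : 0 < b) (hα : α ≠ 0) (hs : 0 < s) :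
    liouvilleProfile a b α s =
      log (2 * α ^ 2 * a * b) + (α - 2) * log s - 2 * log (a + b * s ^ α) := by
  rw [liouvilleProfile, log_div (by positivity) (by positivity), log_mul (by positivity)
    (by positivity), log_rpow hs, log_pow]
  push_cast
  ring

theorem hasDerivAt_liouvilleProfile (ha : 0 < a) (hb : 0 < b) (hα : α ≠ 0) (hs : 0 < s) :
    HasDerivAt (liouvilleProfile a b α) ((2 * α * a / (a + b * s ^ α) - (α + 2)) / s) s := by
  have hD := hasDerivAt_add_mul_rpow a b α hs.ne'
  have hlog := ((hasDerivAt_log hs.ne').const_mul (α - 2)).const_add (log (2 * α ^ 2 * a * b))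
    |>.sub ((hD.log (by positivity)).const_mul 2)
  refine (hlog.congr_deriv ?_).congr_of_eventuallyEq ?_
  · rw [rpow_sub_one hs.ne']
    field_simp
    ring
  · filter_upwards [Ioi_mem_nhds hs] with t ht using liouvilleProfile_eq ha hb hα ht

/-- The derivative of `s ↦ s · (liouvilleProfile a b α)' s`. -/
theorem hasDerivAt_two_mul_div_add_mul_rpow_sub (ha : 0 < a) (hb : 0 < b) (hs : 0 < s) :
    HasDerivAt (fun t => 2 * α * a / (a + b * t ^ α) - (α + 2))
      (-(2 * α ^ 2 * a * b * s ^ (α - 1) / (a + b * s ^ α) ^ 2)) s := by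
  have hD := hasDerivAt_add_mul_rpow a b α hs.ne'
  exact (((hasDerivAt_const s (2 * α * a)).div hD (by positivity)).sub_const (α + 2)).congr_deriv
    (by ring)

theorem liouvilleProfile_radial_ode (ha : 0 < a) (hb : 0 < b) (hα : α ≠ 0) (hs : 0 < s) :
    -deriv (deriv (liouvilleProfile a b α)) s - deriv (liouvilleProfile a b α) s / s =
      exp (liouvilleProfile a b α s) := by
  have hode := deriv_deriv_add_deriv_div_eq hs.ne'
    (eventually_gt_nhds hs |>.mono fun t ht => hasDerivAt_liouvilleProfile ha hb hα ht)
    (hasDerivAt_two_mul_div_add_mul_rpow_sub ha hb hs)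
  rw [exp_liouvilleProfile ha hb hα hs, show α - 2 = α - 1 - 1 by ring, rpow_sub_one hs.ne']
  linear_combination -hode

end LiouvilleProfile

theorem four_mul_sq_mul_rpow_mul_rpow_le_sq {α m s : ℝ} (hα : 2 ≤ α) (hm : 0 ≤ m)
    (hs : 0 ≤ s) :
    4 * α ^ 2 * m ^ (α + 2) * s ^ (α - 2) ≤ ((α + 2) * m ^ α + (α - 2) * s ^ α) ^ 2 := by
  have hα0 : 0 < α := by linarith
  have hw : (α + 2) / (2 * α) + (α - 2) / (2 * α) = 1 := by field_simp; ring
  have hamgm := geom_mean_le_arith_mean2_weighted (by positivity)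
    (div_nonneg (by linarith) (by positivity)) (rpow_nonneg hm α) (rpow_nonneg hs α) hw
  have hpow : ∀ x c : ℝ, 0 ≤ x → ((x ^ α) ^ (c / (2 * α))) ^ 2 = x ^ c := fun x c hx => by
    rw [← rpow_natCast, ← rpow_mul (rpow_nonneg hx α), ← rpow_mul hx]
    congr 1
    field_simp
    push_cast
    ring
  calc 4 * α ^ 2 * m ^ (α + 2) * s ^ (α - 2)
      = (2 * α * ((m ^ α) ^ ((α + 2) / (2 * α)) * (s ^ α) ^ ((α - 2) / (2 * α)))) ^ 2 := by
        rw [mul_pow, mul_pow, mul_pow, hpow _ _ hm, hpow _ _ hs]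
        ring
    _ ≤ (2 * α * ((α + 2) / (2 * α) * m ^ α + (α - 2) / (2 * α) * s ^ α)) ^ 2 := by
        exact pow_le_pow_left₀ (by positivity) (mul_le_mul_of_nonneg_left hamgm (by positivity)) 2
    _ = ((α + 2) * m ^ α + (α - 2) * s ^ α) ^ 2 := by
        field_simp

/-- For `m > 0` and `α = √(2m² + 4)`, the function
`Z(s) = log(4α² m^{α+2} s^{α-2} / ((α+2)m^α + (α-2)s^α)²)` solves `-Z'' - Z'/s = e^Z`
on `(0,∞)`, satisfies `Z(m) = 0`, `Z'(m) = 0`, and `Z ≤ 0` on `(0,∞)`. -/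
theorem singular_liouville_solution (m : ℝ) (hm : 0 < m)
    (α : ℝ) (hα : α = Real.sqrt (2 * m ^ 2 + 4))
    (Z : ℝ → ℝ)
    (hZ : Z = fun s : ℝ =>
      Real.log (4 * α ^ 2 * m ^ (α + 2) * s ^ (α - 2) /
        ((α + 2) * m ^ α + (α - 2) * s ^ α) ^ 2)) :
    (∀ s : ℝ, 0 < s → -(deriv (deriv Z) s) - deriv Z s / s = Real.exp (Z s)) ∧
    Z m = 0 ∧ deriv Z m = 0 ∧ (∀ s : ℝ, 0 < s → Z s ≤ 0) := by
  have hsq : α ^ 2 = 2 * m ^ 2 + 4 := by rw [hα, sq_sqrt (by positivity)]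
  have hα2 : 2 < α := by nlinarith [sqrt_nonneg (2 * m ^ 2 + 4)]
  have ha : 0 < (α + 2) * m ^ α := by positivity
  have hb : 0 < α - 2 := by linarith
  have hZ' : Z = liouvilleProfile ((α + 2) * m ^ α) (α - 2) α := by
    have hc : 4 * α ^ 2 * m ^ (α + 2) = 2 * α ^ 2 * ((α + 2) * m ^ α) * (α - 2) := by
      rw [rpow_add hm, rpow_two]
      linear_combination -2 * α ^ 2 * m ^ α * hsq
    simp only [hZ, hc]
    rfl
  refine ⟨fun s hs => hZ' ▸ liouvilleProfile_radial_ode ha hb (by positivity) hs, ?_, ?_, ?_⟩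
  · have hmm : m ^ (α + 2) * m ^ (α - 2) = (m ^ α) ^ 2 := by
      rw [← rpow_add hm, ← rpow_natCast, ← rpow_mul hm.le]
      ring_nf
    simp only [hZ]
    rw [mul_assoc _ (m ^ (α + 2)), hmm, ← log_one]
    congr 1
    field_simp
    ring
  · rw [hZ', (hasDerivAt_liouvilleProfile ha hb (by positivity) hm).deriv]
    field_simp
    ring
  · intro s hs
    rw [hZ]
    refine log_nonpos (by positivity) ((div_le_one ?_).2
      (four_mul_sq_mul_rpow_mul_rpow_le_sq hα2.le hm.le hs.le))
    positivity
end

section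
/- For m > 0 and α = √(2m²+4), the singular Liouville solution Z(s) = log(4α² m^{α+2} s^{α-2} / ((α+2)m^α + (α-2)s^α)²) satisfies (1/2)∫_0^∞ e^{Z(s)} s ds = √(2m² + 4), which is strictly greater than 2. -/
/-!
After `exp ∘ log` cancels, `e^{Z(s)} s` is the constant `4α² m^{α+2}` times
`s^{α-1} / (a + b s^α)²` with `a = (α+2) m^α`, `b = α - 2 > 0`. The latter has the antiderivative
`-1 / (α b (a + b s^α))`, which tends to `0` at infinity, so its integral over `(0, ∞)` is
`1 / (α a b)`. The mass is then `4α m² / (α² - 4)`, and `α² - 4 = 2m²` makes it `2α`.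
-/

open Real MeasureTheory Set Filter

theorem hasDerivAt_neg_inv_add_rpow {a b p s : ℝ} (hs : 0 < s) (hp : p ≠ 0) (hb : b ≠ 0)
    (hD : a + b * s ^ p ≠ 0) :
    HasDerivAt (fun x => -(p * b * (a + b * x ^ p))⁻¹) (s ^ (p - 1) / (a + b * s ^ p) ^ 2) s := by
  have hD' : HasDerivAt (fun x => p * b * (a + b * x ^ p)) (p * b * (b * (p * s ^ (p - 1)))) s :=
    (((hasDerivAt_rpow_const (Or.inl hs.ne')).const_mul b).const_add a).const_mul (p * b)
  refine (hD'.fun_inv (by simp [hp, hb, hD])).fun_neg.congr_deriv ?_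
  field_simp

theorem integral_Ioi_rpow_sub_one_div_add_rpow_sq {a b p : ℝ} (ha : 0 < a) (hb : 0 < b)
    (hp : 0 < p) :
    ∫ s in Ioi 0, s ^ (p - 1) / (a + b * s ^ p) ^ 2 = 1 / (p * a * b) := by
  have hD : ∀ s : ℝ, 0 ≤ s → 0 < a + b * s ^ p := fun s hs => by positivity
  have hcont : ContinuousWithinAt (fun x => -(p * b * (a + b * x ^ p))⁻¹) (Ici 0) 0 :=
    (((((continuousAt_rpow_const 0 p (Or.inr hp.le)).const_mul b).const_add a).const_mul
      (p * b)).inv₀ (by have := hD 0 le_rfl; positivity)).neg.continuousWithinAt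
  have hlim : Tendsto (fun x => -(p * b * (a + b * x ^ p))⁻¹) atTop (nhds 0) := by
    rw [← neg_zero]
    refine (Tendsto.inv_tendsto_atTop ?_).neg
    exact ((tendsto_atTop_add_const_left _ a
      ((tendsto_rpow_atTop hp).const_mul_atTop hb)).const_mul_atTop (by positivity))
  rw [integral_Ioi_of_hasDerivAt_of_nonneg hcont
    (fun s hs => hasDerivAt_neg_inv_add_rpow hs hp.ne' hb.ne' (hD s hs.le).ne')
    (fun s (hs : 0 < s) => (div_pos (rpow_pos_of_pos hs _) (pow_pos (hD s hs.le) 2)).le) hlim]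
  simp only [zero_rpow hp.ne', mul_zero, add_zero, mul_inv_rev, sub_neg_eq_add, zero_add, one_div]
  field_simp

/-- For `m > 0` and `α = √(2m²+4)`, the singular Liouville solution
`Z(s) = log(4α² m^{α+2} s^{α-2} / ((α+2)m^α + (α-2)s^α)²)` satisfies
`(1/2)∫_0^∞ e^{Z(s)} s ds = √(2m²+4) > 2`. -/
theorem singular_liouville_mass (m : ℝ) (hm : 0 < m)
    (α : ℝ) (hα : α = Real.sqrt (2 * m ^ 2 + 4))
    (Z : ℝ → ℝ)
    (hZ : Z = fun s : ℝ =>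
      Real.log (4 * α ^ 2 * m ^ (α + 2) * s ^ (α - 2) /
        ((α + 2) * m ^ α + (α - 2) * s ^ α) ^ 2)) :
    (1 / 2) * (∫ s in Set.Ioi (0:ℝ), Real.exp (Z s) * s) = Real.sqrt (2 * m ^ 2 + 4) ∧
    2 < Real.sqrt (2 * m ^ 2 + 4) := by
  rw [← hα]
  have hα_sq : α ^ 2 = 2 * m ^ 2 + 4 := by rw [hα, sq_sqrt (by positivity)]
  have hα_gt : 2 < α := by nlinarith [hα ▸ sqrt_nonneg (2 * m ^ 2 + 4)]
  have hα_pos : 0 < α := by linarith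
  have hintegrand : ∀ s ∈ Ioi (0 : ℝ), exp (Z s) * s =
      4 * α ^ 2 * m ^ (α + 2) * (s ^ (α - 1) / ((α + 2) * m ^ α + (α - 2) * s ^ α) ^ 2) := by
    intro s (hs : 0 < s)
    have hD : 0 < (α + 2) * m ^ α + (α - 2) * s ^ α := by
      have := sub_pos.2 hα_gt; positivity
    have hsplit : s ^ (α - 1) = s ^ (α - 2) * s := by
      rw [show α - 1 = α - 2 + 1 by ring, rpow_add_one hs.ne']
    rw [hZ, exp_log (by positivity), hsplit]
    ring
  have hmass : ∫ s in Ioi (0 : ℝ), exp (Z s) * s = 2 * α := by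
    rw [setIntegral_congr_fun measurableSet_Ioi hintegrand, integral_const_mul,
      integral_Ioi_rpow_sub_one_div_add_rpow_sq (by positivity) (sub_pos.2 hα_gt) hα_pos,
      rpow_add hm, rpow_two]
    have := (rpow_pos_of_pos hm α).ne'
    have := (sub_pos.2 hα_gt).ne'
    field_simp
    linear_combination (-2) * hα_sq
  exact ⟨by rw [hmass]; ring, hα_gt⟩
end

section
/- Let w(r) = (2π)^{-1/2} (log(R/l))^{1/2} be the constant value of the Moser function on B_l, and suppose t² ≥ 4π(1+δ) for some δ > 0. Then λ ∫_{B_l} (t w)² e^{(tw)²} dx = (λ/2) t² l² log(R/l) e^{(t²/2π) log(R/l)} ≥ (λ/2) t² log(R/l) · exp( δ' log(1/l) ) for some δ' > 0, provided log(1/R) = o(log(1/l)). In particular, if R = R(n), l = l(n) with log(1/R_n)/log(1/l_n) → 0 and l_n → 0, the quantity tends to +∞, so the normalization identity t² = λ∫_B (tw)² e^{(tw)²+|tw|^{1+ε}} dx with bounded t² is contradicted unless limsup t² ≤ 4π. -/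
open Real MeasureTheory Filter Topology Asymptotics

/-!
On `B_l` the Moser function is the constant `w` with `(t w)² = (t²/2π) log(R/l)`, and
`|B_l| = π l²`, which gives the closed form. Writing `L = log(1/l)` and `A = log(1/R)`, we have
`l² = e^{-2L}` and `log(R/l) = L - A`; since `A = o(L)`, eventually
`2(1+δ) (L - A) ≥ (2+δ) L`, so `t² ≥ 4π(1+δ)` makes the exponent
`-2L + (t²/2π)(L - A)` at least `δ L`. Blow-up follows because `L - A ~ L → ∞`.
-/

lemma setIntegral_ball_fin_two_const (x : EuclideanSpace ℝ (Fin 2)) {r : ℝ} (hr : 0 ≤ r)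
    (c : ℝ) : ∫ _ in Metric.ball x r, c = π * r ^ 2 * c := by
  rw [setIntegral_const, measureReal_def, EuclideanSpace.volume_ball_fin_two, ENNReal.toReal_mul,
    ENNReal.toReal_pow, ENNReal.toReal_ofReal hr, ENNReal.toReal_ofReal pi_pos.le, smul_eq_mul]
  ring

lemma mul_inv_sqrt_two_pi_mul_sqrt_sq (t : ℝ) {L : ℝ} (hL : 0 ≤ L) :
    (t * ((√(2 * π))⁻¹ * √L)) ^ 2 = t ^ 2 / (2 * π) * L := by
  rw [mul_pow, mul_pow, inv_pow, sq_sqrt (by positivity), sq_sqrt hL]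
  ring

lemma exp_mul_log_one_div_le_sq_mul_exp {l δ a : ℝ} (hl : 0 < l)
    (h : (δ + 2) * log (1 / l) ≤ a) : exp (δ * log (1 / l)) ≤ l ^ 2 * exp a := by
  have hl_sq : l ^ 2 = exp (-2 * log (1 / l)) := by
    rw [one_div, log_inv, neg_mul_neg, ← exp_log (pow_pos hl 2), log_pow, Nat.cast_ofNat]
  rw [hl_sq, ← exp_add]
  exact exp_le_exp.mpr (by linarith)

lemma mul_exp_le_mul_sq_mul_exp {lam δ l t D : ℝ} (hlam : 0 ≤ lam) (hl : 0 < l) (hD : 0 ≤ D)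
    (ht : 4 * π * (1 + δ) ≤ t ^ 2) (hDl : (δ + 2) * log (1 / l) ≤ 2 * (1 + δ) * D) :
    lam / 2 * t ^ 2 * D * exp (δ * log (1 / l)) ≤
      lam / 2 * t ^ 2 * l ^ 2 * D * exp (t ^ 2 / (2 * π) * D) := by
  have hs : 2 * (1 + δ) ≤ t ^ 2 / (2 * π) := by
    rw [le_div_iff₀ (by positivity)]
    linarith
  have hexp := exp_mul_log_one_div_le_sq_mul_exp hl (hDl.trans (mul_le_mul_of_nonneg_right hs hD))
  calc lam / 2 * t ^ 2 * D * exp (δ * log (1 / l))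
      ≤ lam / 2 * t ^ 2 * D * (l ^ 2 * exp (t ^ 2 / (2 * π) * D)) := by gcongr
    _ = lam / 2 * t ^ 2 * l ^ 2 * D * exp (t ^ 2 / (2 * π) * D) := by ring

section Sequences

variable {α : Type*} {F : Filter α}

lemma tendsto_log_one_div_atTop {l : α → ℝ} (hl : Tendsto l F (𝓝[>] 0)) :
    Tendsto (fun x => log (1 / l x)) F atTop := by
  refine (tendsto_neg_atBot_atTop.comp (tendsto_log_nhdsGT_zero.comp hl)).congr fun x => ?_
  simp [log_inv]

lemma isLittleO_of_tendsto_div_zero {f g : α → ℝ} (hfg : Tendsto (fun x => f x / g x) F (𝓝 0))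
    (hg : Tendsto g F atTop) : f =o[F] g :=
  (isLittleO_iff_tendsto' ((hg.eventually_ne_atTop 0).mono fun _ hx h => absurd h hx)).mpr hfg

lemma eventually_add_two_mul_le {δ : ℝ} (hδ : 0 < δ) {A L : α → ℝ} (hA : A =o[F] L)
    (hL : Tendsto L F atTop) : ∀ᶠ x in F, (δ + 2) * L x ≤ 2 * (1 + δ) * (L x - A x) := by
  filter_upwards [hA.def (c := δ / (2 * (1 + δ))) (by positivity), hL.eventually_ge_atTop 0]
    with x hAx hLx
  rw [norm_eq_abs, norm_eq_abs, abs_of_nonneg hLx] at hAx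
  have hc : 2 * (1 + δ) * (δ / (2 * (1 + δ))) = δ := by field_simp
  nlinarith [le_abs_self (A x)]

lemma tendsto_sub_atTop_of_isLittleO {A L : α → ℝ} (hA : A =o[F] L) (hL : Tendsto L F atTop) :
    Tendsto (fun x => L x - A x) F atTop :=
  (hA.neg_left.congr_left fun x => by simp).isEquivalent.symm.tendsto_atTop hL

end Sequences

theorem moser_growth_estimate_general (lam δ : ℝ) (hlam : 0 < lam) (hδ : 0 < δ)
    (l R t w : ℕ → ℝ)
    (hl : ∀ n, 0 < l n) (hlR : ∀ n, l n < R n)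
    (hl0 : Tendsto l atTop (nhds 0))
    (hsmall : Tendsto (fun n => Real.log (1 / R n) / Real.log (1 / l n)) atTop (nhds 0))
    (ht : ∀ n, 4 * Real.pi * (1 + δ) ≤ (t n) ^ 2)
    (hw : ∀ n, w n = (Real.sqrt (2 * Real.pi))⁻¹ * Real.sqrt (Real.log (R n / l n))) :
    (∀ n, (∫ _x in Metric.ball (0 : EuclideanSpace ℝ (Fin 2)) (l n),
        lam * (t n * w n) ^ 2 * Real.exp ((t n * w n) ^ 2))
      = lam / 2 * (t n) ^ 2 * (l n) ^ 2 * Real.log (R n / l n) *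
          Real.exp ((t n) ^ 2 / (2 * Real.pi) * Real.log (R n / l n))) ∧
    (∃ δ' > (0:ℝ), ∀ᶠ n in atTop,
      lam / 2 * (t n) ^ 2 * Real.log (R n / l n) * Real.exp (δ' * Real.log (1 / l n))
        ≤ lam / 2 * (t n) ^ 2 * (l n) ^ 2 * Real.log (R n / l n) *
            Real.exp ((t n) ^ 2 / (2 * Real.pi) * Real.log (R n / l n))) ∧
    Tendsto (fun n => lam / 2 * (t n) ^ 2 * (l n) ^ 2 * Real.log (R n / l n) *
        Real.exp ((t n) ^ 2 / (2 * Real.pi) * Real.log (R n / l n))) atTop atTop := by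
  have hD_nonneg n : 0 ≤ log (R n / l n) := log_nonneg ((one_le_div (hl n)).mpr (hlR n).le)
  have hD n : log (R n / l n) = log (1 / l n) - log (1 / R n) := by
    rw [log_div ((hl n).trans (hlR n)).ne' (hl n).ne', one_div, one_div, log_inv, log_inv]
    ring
  have hL := tendsto_log_one_div_atTop (tendsto_nhdsWithin_iff.mpr ⟨hl0, .of_forall hl⟩)
  have hA := isLittleO_of_tendsto_div_zero hsmall hL
  have hbound : ∀ᶠ n in atTop,
      lam / 2 * (t n) ^ 2 * log (R n / l n) * exp (δ * log (1 / l n)) ≤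
        lam / 2 * (t n) ^ 2 * (l n) ^ 2 * log (R n / l n) *
          exp ((t n) ^ 2 / (2 * π) * log (R n / l n)) :=
    (eventually_add_two_mul_le hδ hA hL).mono fun n h =>
      mul_exp_le_mul_sq_mul_exp hlam.le (hl n) (hD_nonneg n) (ht n) (by rwa [hD])
  refine ⟨fun n => ?_, ⟨δ, hδ, hbound⟩, ?_⟩
  · rw [setIntegral_ball_fin_two_const _ (hl n).le, hw n,
      mul_inv_sqrt_two_pi_mul_sqrt_sq _ (hD_nonneg n)]
    field_simp
  have hDtop : Tendsto (fun n => log (R n / l n)) atTop atTop := by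
    simpa only [hD] using tendsto_sub_atTop_of_isLittleO hA hL
  refine tendsto_atTop_mono' _ ?_
    (hDtop.const_mul_atTop (by positivity : 0 < lam * (2 * π * (1 + δ))))
  filter_upwards [hbound, hL.eventually_ge_atTop 0] with n hn hLn
  refine hn.trans' ?_
  calc lam * (2 * π * (1 + δ)) * log (R n / l n)
      = lam / 2 * (4 * π * (1 + δ)) * log (R n / l n) * 1 := by ring
    _ ≤ lam / 2 * (t n) ^ 2 * log (R n / l n) * exp (δ * log (1 / l n)) := by
      have := hD_nonneg n
      gcongr
      · exact ht n
      · exact one_le_exp (by positivity)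

/-- Key growth estimate: if `w_n = (2π)^{-1/2}(log(R_n/l_n))^{1/2}` is the constant value of
the Moser function on `B_{l_n}`, `t_n² ≥ 4π(1+δ)`, `l_n → 0` and `log(1/R_n) = o(log(1/l_n))`,
then `λ∫_{B_{l_n}} (t_n w_n)² e^{(t_n w_n)²} dx = (λ/2) t_n² l_n² log(R_n/l_n)
e^{(t_n²/2π) log(R_n/l_n)}`, this quantity is eventually bounded below by
`(λ/2) t_n² log(R_n/l_n) exp(δ' log(1/l_n))` for some `δ' > 0`, and it tends to `+∞`. -/
theorem moser_growth_estimate (lam δ : ℝ) (hlam : 0 < lam) (hδ : 0 < δ)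
    (l R t w : ℕ → ℝ)
    (hl : ∀ n, 0 < l n) (hlR : ∀ n, l n < R n) (hR : ∀ n, R n ≤ 1)
    (hl0 : Tendsto l atTop (nhds 0))
    (hsmall : Tendsto (fun n => Real.log (1 / R n) / Real.log (1 / l n)) atTop (nhds 0))
    (ht : ∀ n, 4 * Real.pi * (1 + δ) ≤ (t n) ^ 2)
    (hw : ∀ n, w n = (Real.sqrt (2 * Real.pi))⁻¹ * Real.sqrt (Real.log (R n / l n))) :
    (∀ n, (∫ _x in Metric.ball (0 : EuclideanSpace ℝ (Fin 2)) (l n),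
        lam * (t n * w n) ^ 2 * Real.exp ((t n * w n) ^ 2))
      = lam / 2 * (t n) ^ 2 * (l n) ^ 2 * Real.log (R n / l n) *
          Real.exp ((t n) ^ 2 / (2 * Real.pi) * Real.log (R n / l n))) ∧
    (∃ δ' > (0:ℝ), ∀ᶠ n in atTop,
      lam / 2 * (t n) ^ 2 * Real.log (R n / l n) * Real.exp (δ' * Real.log (1 / l n))
        ≤ lam / 2 * (t n) ^ 2 * (l n) ^ 2 * Real.log (R n / l n) *
            Real.exp ((t n) ^ 2 / (2 * Real.pi) * Real.log (R n / l n))) ∧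
    Tendsto (fun n => lam / 2 * (t n) ^ 2 * (l n) ^ 2 * Real.log (R n / l n) *
        Real.exp ((t n) ^ 2 / (2 * Real.pi) * Real.log (R n / l n))) atTop atTop :=
  moser_growth_estimate_general lam δ hlam hδ l R t w hl hlR hl0 hsmall ht hw
end
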